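/- Let L = ⟨G, u⟩ ≅ M(G,2) and suppose G is not isomorphic to M(H,2) for any group H. Then every automorphism of the Moufang loop L preserves G setwise (and hence preserves the coset Gu). -/

import Mathlib

/-- The Chein loop `M(G,2) = G ⊎ Gu`, realized on `G ⊕ G` where `Sum.inl g = g`
and `Sum.inr g = g·u`, with multiplication extending that of `G` and satisfying
(c1) `g₁(g₂u) = (g₂g₁)u`, (c2) `(g₁u)g₂ = (g₁g₂⁻¹)u`, (c3) `(g₁u)(g₂u) = g₂⁻¹g₁`. -/
instance cheinMul (G : Type*) [Group G] : Mul (G ⊕ G) :=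
  ⟨fun x y =>
    match x, y with
    | .inl a, .inl b => .inl (a * b)
    | .inl a, .inr b => .inr (b * a)
    | .inr a, .inl b => .inr (a * b⁻¹)
    | .inr a, .inr b => .inl (b⁻¹ * a)⟩


instance cheinOne (G : Type*) [Group G] : One (G ⊕ G) := ⟨Sum.inl 1⟩

/-!
If an automorphism `f` of `M(G,2)` sent some element of `G` into `Gu`, then `f(G)` would be a
group meeting both `G` and `Gu`. Such a group `S` is itself a Chein loop: with `K = S ∩ G` and
`au ∈ S`, the map `k ↦ k`, `ku ↦ (ak)u` is an isomorphism `M(K,2) ≅ S`. Hence `G ≅ M(K,2)`,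
which is excluded. Applying this to `f⁻¹` as well shows that `f` also preserves `Gu`.
-/

noncomputable def MulHom.srangeEquivOfInjective {M N : Type*} [Mul M] [Mul N] (f : M →ₙ* N)
    (hf : Function.Injective f) : M ≃* f.srange :=
  MulEquiv.ofBijective f.srangeRestrict
    ⟨fun _ _ hxy => hf (congrArg Subtype.val hxy), f.srangeRestrict_surjective⟩

namespace Chein

variable {G : Type*} [Group G]

@[simp] lemma inl_mul_inl (a b : G) :
    (Sum.inl a : G ⊕ G) * Sum.inl b = Sum.inl (a * b) := rfl
@[simp] lemma inl_mul_inr (a b : G) :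
    (Sum.inl a : G ⊕ G) * Sum.inr b = Sum.inr (b * a) := rfl
@[simp] lemma inr_mul_inl (a b : G) :
    (Sum.inr a : G ⊕ G) * Sum.inl b = Sum.inr (a * b⁻¹) := rfl
@[simp] lemma inr_mul_inr (a b : G) :
    (Sum.inr a : G ⊕ G) * Sum.inr b = Sum.inl (b⁻¹ * a) := rfl

def inlHom : G →ₙ* G ⊕ G := ⟨Sum.inl, fun _ _ => rfl⟩

lemma eq_inl_one_of_mul_self {x : G ⊕ G} (hx : x * x = x) : x = Sum.inl 1 := by
  rcases x with x | x
  · simpa using hx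
  · simp at hx

/-- The embedding `M(K,2) → M(G,2)` that is the inclusion on `K` and sends `u` to `au`. -/
def embed (K : Subgroup G) (a : G) : K ⊕ K →ₙ* G ⊕ G where
  toFun := Sum.elim (fun k => Sum.inl k) (fun k => Sum.inr (a * k))
  map_mul' := by
    rintro (x | x) (y | y) <;>
      simp only [Sum.elim_inl, Sum.elim_inr, inl_mul_inl, inl_mul_inr, inr_mul_inl, inr_mul_inr,
        Subgroup.coe_mul, Subgroup.coe_inv, mul_inv_rev, mul_assoc, inv_mul_cancel_left]

lemma embed_injective (K : Subgroup G) (a : G) : Function.Injective (embed K a) := by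
  rintro (x | x) (y | y) hxy <;>
    simp only [embed, MulHom.coe_mk, Sum.elim_inl, Sum.elim_inr, Sum.inl.injEq, Sum.inr.injEq,
      reduceCtorEq, mul_right_inj] at hxy <;>
    simp [Subtype.ext hxy]

section Subloop

variable {H : Type*} [Group H] (φ : H →ₙ* G ⊕ G)

lemma map_one_eq_inl_one : φ 1 = Sum.inl 1 :=
  eq_inl_one_of_mul_self (by rw [← map_mul, one_mul])

def inlRange : Subgroup G where
  carrier := {x | Sum.inl x ∈ φ.srange}
  mul_mem' hx hy := φ.srange.mul_mem hx hy
  one_mem' := ⟨1, map_one_eq_inl_one φ⟩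
  inv_mem' := by
    rintro x ⟨h, hx⟩
    have hinv : φ h⁻¹ * Sum.inl x = Sum.inl 1 := by
      rw [← hx, ← map_mul, inv_mul_cancel, map_one_eq_inl_one]
    rcases hy : φ h⁻¹ with y | y <;> rw [hy] at hinv
    · exact ⟨h⁻¹, by rw [hy, eq_inv_of_mul_eq_one_left (Sum.inl.inj hinv)]⟩
    · simp at hinv

lemma inl_mem_srange_iff {x : G} : Sum.inl x ∈ φ.srange ↔ x ∈ inlRange φ := Iff.rfl

variable {φ} {a : G}

lemma inr_mem_srange_iff (ha : Sum.inr a ∈ φ.srange) {x : G} :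
    Sum.inr x ∈ φ.srange ↔ a⁻¹ * x ∈ inlRange φ := by
  constructor
  · intro hx
    have hmem : Sum.inl (x⁻¹ * a) ∈ φ.srange := φ.srange.mul_mem ha hx
    simpa using (inlRange φ).inv_mem hmem
  · intro hx
    simpa using φ.srange.mul_mem hx ha

lemma srange_embed_inlRange (ha : Sum.inr a ∈ φ.srange) :
    (embed (inlRange φ) a).srange = φ.srange := by
  ext (x | x)
  · simp [embed, ← inl_mem_srange_iff, MulHom.mem_srange]
  · simp only [MulHom.mem_srange, Sum.exists, embed, MulHom.coe_mk, Sum.elim_inl, Sum.elim_inr,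
      reduceCtorEq, exists_false, false_or, Sum.inr.injEq, inr_mem_srange_iff ha]
    exact ⟨fun ⟨k, hk⟩ => hk ▸ by simp, fun hx => ⟨⟨_, hx⟩, mul_inv_cancel_left a x⟩⟩

noncomputable def mulEquivOfInjective (ha : Sum.inr a ∈ φ.srange) (hφ : Function.Injective φ) :
    H ≃* (inlRange φ ⊕ inlRange φ) :=
  (φ.srangeEquivOfInjective hφ).trans <|
    (MulEquiv.subsemigroupCongr (srange_embed_inlRange ha)).symm.trans
      ((embed _ a).srangeEquivOfInjective (embed_injective _ a)).symm

end Subloop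

lemma exists_map_inl_eq_inl {G : Type} [Group G]
    (h : ∀ (H : Type) [Group H], IsEmpty (G ≃* (H ⊕ H))) (f : (G ⊕ G) ≃* (G ⊕ G)) (g : G) :
    ∃ g', f (Sum.inl g) = Sum.inl g' := by
  rcases hg : f (Sum.inl g) with g' | a
  · exact ⟨g', rfl⟩
  · have hφ : Function.Injective (f.toMulHom.comp inlHom) :=
      f.injective.comp Sum.inl_injective
    exact (h _).elim (mulEquivOfInjective (φ := f.toMulHom.comp inlHom) ⟨g, hg⟩ hφ)

end Chein

theorem aut_preserves_G_general
    (G : Type) [Group G]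
    (h : ∀ (H : Type) [Group H], IsEmpty (G ≃* (H ⊕ H)))
    (f : (G ⊕ G) ≃* (G ⊕ G)) :
    (∀ g : G, ∃ g' : G, f (Sum.inl g) = Sum.inl g') ∧
    (∀ g : G, ∃ g' : G, f (Sum.inr g) = Sum.inr g') := by
  refine ⟨Chein.exists_map_inl_eq_inl h f, fun g => ?_⟩
  rcases hg : f (Sum.inr g) with x | x
  · obtain ⟨g', hg'⟩ := Chein.exists_map_inl_eq_inl h f.symm x
    rw [← hg, MulEquiv.symm_apply_apply] at hg'
    exact absurd hg' Sum.inr_ne_inl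
  · exact ⟨x, rfl⟩

/-- Lemma 3.3: let `L = ⟨G,u⟩ ≅ M(G,2)` (realized on `G ⊕ G`, with `Sum.inl G = G`
and `Sum.inr G = Gu`), and suppose `G` is not isomorphic to `M(H,2)` for any group
`H`. Then every automorphism of the loop `L` preserves `G` setwise, and hence also
preserves the coset `Gu`. -/
theorem aut_preserves_G
    (G : Type) [Group G] [Finite G]
    (h : ∀ (H : Type) [Group H], IsEmpty (G ≃* (H ⊕ H)))
    (f : (G ⊕ G) ≃* (G ⊕ G)) :
    (∀ g : G, ∃ g' : G, f (Sum.inl g) = Sum.inl g') ∧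
    (∀ g : G, ∃ g' : G, f (Sum.inr g) = Sum.inr g') :=
  aut_preserves_G_general G h f
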